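/- Localization of coherent states under the momentum-side projection E_p: for (x₀,p₀) ∈ ℝ² with p₀ ∉ ℤ, if ⌊p₀⌋ is even then ‖E_p φ_ħ^{x₀,p₀}‖² → 1 as ħ → 0⁺, while if ⌊p₀⌋ is odd then ‖E_p φ_ħ^{x₀,p₀}‖² → 0 as ħ → 0⁺. -/

import Mathlib

open MeasureTheory Filter Topology

noncomputable section

/-- The Hilbert space `L²(ℝ, ℂ)` with inner product `⟪f,g⟫ = ∫ conj(f x) · g x dx`. -/
abbrev HL2 : Type := MeasureTheory.Lp ℂ 2 (MeasureTheory.volume : MeasureTheory.Measure ℝ)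

/-- Indicator of `⋃ₖ [k, k+1/2)`. -/
def chiL (x : ℝ) : ℂ := if Int.fract x < 1/2 then 1 else 0

/-- Indicator of `⋃ₖ [k+1/2, k+1)`. -/
def chiR (x : ℝ) : ℂ := if 1/2 ≤ Int.fract x then 1 else 0

/-- Indicator of `⋃ₖ [2k, 2k+1)`. -/
def chiE (p : ℝ) : ℂ := if Even ⌊p⌋ then 1 else 0

/-- Indicator of `⋃ₖ [2k+1, 2k+2)`. -/
def chiO (p : ℝ) : ℂ := if Odd ⌊p⌋ then 1 else 0

/-- The `hbar`-scaled Fourier integral formula `(2πhbar)^{−1/2} ∫ e^{−ipx/hbar} f(x) dx`. -/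
def fourierFormula (hbar : ℝ) (f : ℝ → ℂ) (p : ℝ) : ℂ :=
  ((Real.sqrt (2 * Real.pi * hbar) : ℝ) : ℂ)⁻¹ *
    ∫ x : ℝ, Complex.exp (-(Complex.I * (p : ℂ) * (x : ℂ) / (hbar : ℂ))) * f x

/-- The coherent state `φ_ħ^{x₀,p₀}(x) = (πħ)^{−1/4} e^{−(x−x₀)²/(2ħ)} e^{i p₀ x/ħ − i p₀ x₀/(2ħ)}`. -/
def coherent (hbar x₀ p₀ : ℝ) (x : ℝ) : ℂ :=
  (((Real.pi * hbar) ^ (-(1/4 : ℝ)) : ℝ) : ℂ) *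
    Complex.exp (-(((x - x₀) ^ 2 / (2 * hbar) : ℝ) : ℂ)) *
    Complex.exp (Complex.I * ((p₀ * x / hbar : ℝ) : ℂ)
      - Complex.I * ((p₀ * x₀ / (2 * hbar) : ℝ) : ℂ))

/-!
By Plancherel, `‖E_p φ‖² = ∫ |χ_e|² |𝓕_ħ φ|²`. The `ħ`-Fourier transform of the coherent state
at `(x₀, p₀)` is the coherent state at `(p₀, -x₀)`, and the squared modulus of a coherent state is
a Gaussian density of variance `ħ/2`; so `‖E_p φ‖²` is the expectation of `|χ_e|²` under
`N(p₀, ħ/2)`. Realising `N(p₀, v)` as the law of `p₀ + √v Z` with `Z` standard normal, dominated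
convergence gives the limit `|χ_e(p₀)|²` as `v → 0`, since `χ_e` is bounded and locally constant
off the integers.
-/

open ProbabilityTheory

theorem MeasureTheory.L2.norm_sq_eq_integral_norm_sq {α E : Type*} [MeasurableSpace α]
    {μ : Measure α} [NormedAddCommGroup E] (f : Lp E 2 μ) :
    ‖f‖ ^ 2 = ∫ a, ‖f a‖ ^ 2 ∂μ := by
  rw [Lp.norm_def, MemLp.eLpNorm_eq_integral_rpow_norm two_ne_zero ENNReal.ofNat_ne_top
    (Lp.memLp f), ENNReal.toReal_ofReal (by positivity), ← Real.rpow_natCast,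
    ← Real.rpow_mul (integral_nonneg fun _ => by positivity)]
  norm_num

theorem continuousAt_comp_floor {X : Type*} [TopologicalSpace X] (f : ℤ → X) {p : ℝ}
    (hp : ∀ k : ℤ, p ≠ k) : ContinuousAt (fun q => f ⌊q⌋) p := by
  have hlt : (⌊p⌋ : ℝ) < p := (Int.floor_le p).lt_of_ne (hp ⌊p⌋).symm
  refine (continuousAt_const (y := f ⌊p⌋)).congr ?_
  filter_upwards [Ioo_mem_nhds hlt (Int.lt_floor_add_one p)] with q hq
  rw [(Int.floor_eq_iff.mpr ⟨hq.1.le, hq.2⟩ : ⌊q⌋ = ⌊p⌋)]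

theorem ProbabilityTheory.gaussianReal_eq_map_zero_one (μ : ℝ) (v : NNReal) :
    gaussianReal μ v = (gaussianReal 0 1).map (fun u => μ + √v * u) := by
  have hcomp : (fun u : ℝ => μ + √v * u) = (μ + ·) ∘ (√v * ·) := rfl
  rw [hcomp, ← Measure.map_map (by fun_prop) (by fun_prop), gaussianReal_map_const_mul,
    gaussianReal_map_const_add, mul_zero, zero_add, mul_one]
  congr
  ext
  simp

theorem ProbabilityTheory.tendsto_integral_gaussianReal_of_continuousAt {E : Type*}
    [NormedAddCommGroup E] [NormedSpace ℝ E] [CompleteSpace E] {g : ℝ → E} {μ C : ℝ}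
    (hg : StronglyMeasurable g) (hC : ∀ x, ‖g x‖ ≤ C) (hμ : ContinuousAt g μ) :
    Tendsto (fun v : NNReal => ∫ x, g x ∂gaussianReal μ v) (𝓝 0) (𝓝 (g μ)) := by
  have hshift : ∀ v : NNReal,
      ∫ x, g x ∂gaussianReal μ v = ∫ u, g (μ + √v * u) ∂gaussianReal 0 1 := by
    intro v
    rw [gaussianReal_eq_map_zero_one, integral_map (by fun_prop) hg.aestronglyMeasurable]
  simp_rw [hshift]
  have hconst : ∫ _u, g μ ∂gaussianReal 0 1 = g μ := by
    rw [integral_const, probReal_univ, one_smul]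
  rw [← hconst]
  refine tendsto_integral_filter_of_dominated_convergence (fun _ => C)
    (Eventually.of_forall fun v => (hg.comp_measurable (by fun_prop)).aestronglyMeasurable)
    (Eventually.of_forall fun v => Eventually.of_forall fun u => hC _) (integrable_const C)
    (Eventually.of_forall fun u => ?_)
  have hsqrt : Tendsto (fun v : NNReal => μ + √v * u) (𝓝 0) (𝓝 μ) := by
    have : Continuous (fun v : NNReal => μ + √v * u) := by fun_prop
    simpa using this.tendsto 0
  exact hμ.tendsto.comp hsqrt

theorem norm_coherent {hbar : ℝ} (hh : 0 ≤ hbar) (x₀ p₀ x : ℝ) :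
    ‖coherent hbar x₀ p₀ x‖
      = (Real.pi * hbar) ^ (-(1/4 : ℝ)) * Real.exp (-(x - x₀) ^ 2 / (2 * hbar)) := by
  have hphase : (Complex.I * ((p₀ * x / hbar : ℝ) : ℂ)
      - Complex.I * ((p₀ * x₀ / (2 * hbar) : ℝ) : ℂ)).re = 0 := by
    simp only [Complex.sub_re, Complex.mul_re, Complex.I_re, Complex.I_im, Complex.ofReal_re,
      Complex.ofReal_im]
    ring
  rw [coherent, norm_mul, norm_mul, Complex.norm_exp, Complex.norm_exp, hphase, Real.exp_zero,
    mul_one, Complex.norm_of_nonneg (by positivity), Complex.neg_re, Complex.ofReal_re, neg_div]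

theorem integrable_coherent {hbar : ℝ} (hh : 0 < hbar) (x₀ p₀ : ℝ) :
    Integrable (coherent hbar x₀ p₀) := by
  refine (integrable_norm_iff (by unfold coherent; fun_prop)).mp ?_
  simp_rw [norm_coherent hh.le]
  have h := (integrable_exp_neg_mul_sq (b := 1 / (2 * hbar)) (by positivity)).comp_sub_right x₀
  refine (h.const_mul ((Real.pi * hbar) ^ (-(1/4 : ℝ)))).congr (Eventually.of_forall fun x => ?_)
  simp only [neg_div, neg_mul, one_div_mul_eq_div]

theorem norm_sq_coherent {hbar : ℝ} (hh : 0 < hbar) (x₀ p₀ x : ℝ) :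
    ‖coherent hbar x₀ p₀ x‖ ^ 2 = gaussianPDFReal x₀ (hbar / 2).toNNReal x := by
  rw [norm_coherent hh.le, gaussianPDFReal, Real.coe_toNNReal _ (by positivity), mul_pow,
    ← Real.exp_nat_mul, ← Real.rpow_natCast, ← Real.rpow_mul (by positivity),
    Real.sqrt_eq_rpow, ← Real.rpow_neg (by positivity)]
  congr 2
  · ring
  · norm_num
  · push_cast
    field_simp

theorem fourierFormula_congr_ae {hbar : ℝ} {f g : ℝ → ℂ} (hfg : f =ᵐ[volume] g) :
    fourierFormula hbar f = fourierFormula hbar g := by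
  ext p
  rw [fourierFormula, fourierFormula, integral_congr_ae (hfg.mono fun x hx => by rw [hx])]

theorem fourierFormula_coherent {hbar : ℝ} (hh : 0 < hbar) (x₀ p₀ : ℝ) :
    fourierFormula hbar (coherent hbar x₀ p₀) = coherent hbar p₀ (-x₀) := by
  ext p
  have hne : (hbar : ℂ) ≠ 0 := by exact_mod_cast hh.ne'
  set b : ℂ := ((-(1 / (2 * hbar)) : ℝ) : ℂ)
  set c : ℂ := (x₀ + Complex.I * (p₀ - p)) / hbar
  set d : ℂ := -(x₀ ^ 2 / (2 * hbar)) - Complex.I * (p₀ * x₀ / (2 * hbar))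
  have hb : b.re < 0 := by
    simp only [b, Complex.ofReal_re, neg_lt_zero]
    positivity
  have hintegrand : ∀ x : ℝ, Complex.exp (-(Complex.I * p * x / hbar)) * coherent hbar x₀ p₀ x
      = (((Real.pi * hbar) ^ (-(1/4 : ℝ)) : ℝ) : ℂ) * Complex.exp (b * x ^ 2 + c * x + d) := by
    intro x
    rw [coherent, mul_left_comm, mul_assoc, ← Complex.exp_add, ← Complex.exp_add]
    congr 2
    simp only [b, c, d]
    push_cast
    field_simp
    ring
  have hsqrt : (Real.pi / -b : ℂ) ^ (1 / 2 : ℂ) = ((Real.sqrt (2 * Real.pi * hbar) : ℝ) : ℂ) := by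
    have : (Real.pi / -b : ℂ) = ((2 * Real.pi * hbar : ℝ) : ℂ) := by
      simp only [b]; push_cast; field_simp
    rw [this, Real.sqrt_eq_rpow, Complex.ofReal_cpow (by positivity)]
    norm_num
  have hexponent : d - c ^ 2 / (4 * b) = -(((p - p₀) ^ 2 / (2 * hbar) : ℝ) : ℂ) +
      (Complex.I * ((-x₀ * p / hbar : ℝ) : ℂ) - Complex.I * ((-x₀ * p₀ / (2 * hbar) : ℝ) : ℂ)) := by
    simp only [b, c, d]
    push_cast
    field_simp
    linear_combination (4 * (p - p₀) ^ 2 : ℂ) * Complex.I_sq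
  have hroot : ((Real.sqrt (2 * Real.pi * hbar) : ℝ) : ℂ) ≠ 0 := by
    exact_mod_cast (Real.sqrt_pos.mpr (by positivity)).ne'
  rw [fourierFormula, integral_congr_ae (Eventually.of_forall hintegrand), integral_const_mul,
    integral_cexp_quadratic hb, hsqrt, hexponent, Complex.exp_add, coherent]
  field_simp

theorem measurable_chiE : Measurable chiE :=
  (measurable_from_top (f := fun n : ℤ => if Even n then (1 : ℂ) else 0)).comp Int.measurable_floor

theorem continuousAt_chiE {p : ℝ} (hp : ∀ k : ℤ, p ≠ k) : ContinuousAt chiE p :=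
  continuousAt_comp_floor (fun n : ℤ => if Even n then (1 : ℂ) else 0) hp

theorem norm_chiE_le_one (p : ℝ) : ‖chiE p‖ ≤ 1 := by
  unfold chiE
  split_ifs <;> simp

/-- Localization of coherent states under the momentum-side projection
`E_p = 𝓕_ħ⁻¹ (mult. by χ_e) 𝓕_ħ`: for `p₀ ∉ ℤ`, if `⌊p₀⌋` is even then
`‖E_p φ_ħ^{x₀,p₀}‖² → 1` and if `⌊p₀⌋` is odd then `‖E_p φ_ħ^{x₀,p₀}‖² → 0`, as `ħ → 0⁺`. -/
theorem coherent_localization_Ep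
    (𝓕 : ℝ → HL2 ≃ₗᵢ[ℂ] HL2)
    (h𝓕 : ∀ hbar : ℝ, 0 < hbar → ∀ f : HL2, Integrable (⇑f) volume →
      ⇑(𝓕 hbar f) =ᵐ[volume] fourierFormula hbar (⇑f))
    (Ep : ℝ → HL2 →L[ℂ] HL2)
    (hEp : ∀ hbar : ℝ, 0 < hbar → ∀ f : HL2,
      ⇑(𝓕 hbar (Ep hbar f)) =ᵐ[volume] fun p => chiE p * (𝓕 hbar f) p)
    (φ : ℝ → ℝ → ℝ → HL2)
    (hφ : ∀ hbar : ℝ, 0 < hbar → ∀ x₀ p₀ : ℝ,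
      ⇑(φ hbar x₀ p₀) =ᵐ[volume] coherent hbar x₀ p₀)
    (x₀ p₀ : ℝ) (hp₀ : ∀ k : ℤ, p₀ ≠ (k : ℝ)) :
    (Even ⌊p₀⌋ →
      Tendsto (fun hbar : ℝ => ‖Ep hbar (φ hbar x₀ p₀)‖ ^ 2) (𝓝[>] (0 : ℝ)) (𝓝 1)) ∧
    (Odd ⌊p₀⌋ →
      Tendsto (fun hbar : ℝ => ‖Ep hbar (φ hbar x₀ p₀)‖ ^ 2) (𝓝[>] (0 : ℝ)) (𝓝 0)) := by
  have hnorm : ∀ᶠ hbar in 𝓝[>] (0 : ℝ),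
      ∫ p, ‖chiE p‖ ^ 2 ∂gaussianReal p₀ (hbar / 2).toNNReal = ‖Ep hbar (φ hbar x₀ p₀)‖ ^ 2 := by
    filter_upwards [self_mem_nhdsWithin] with hbar (hh : 0 < hbar)
    have hφF : ⇑(𝓕 hbar (φ hbar x₀ p₀)) =ᵐ[volume] coherent hbar p₀ (-x₀) := by
      rw [← fourierFormula_coherent hh, ← fourierFormula_congr_ae (hφ hbar hh x₀ p₀)]
      exact h𝓕 hbar hh _ ((integrable_coherent hh x₀ p₀).congr (hφ hbar hh x₀ p₀).symm)
    rw [← (𝓕 hbar).norm_map, L2.norm_sq_eq_integral_norm_sq, eq_comm,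
      integral_gaussianReal_eq_integral_smul (by simpa using hh)]
    refine integral_congr_ae ?_
    filter_upwards [hEp hbar hh (φ hbar x₀ p₀), hφF] with p hE hF
    rw [hE, hF, norm_mul, mul_pow, norm_sq_coherent hh, smul_eq_mul, mul_comm]
  have hvar : Tendsto (fun hbar : ℝ => (hbar / 2).toNNReal) (𝓝[>] (0 : ℝ)) (𝓝 0) := by
    have : Continuous fun hbar : ℝ => (hbar / 2).toNNReal := by fun_prop
    simpa using (this.tendsto 0).mono_left nhdsWithin_le_nhds
  have hlim := (tendsto_integral_gaussianReal_of_continuousAt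
    (g := fun p => ‖chiE p‖ ^ 2) (C := 1) (measurable_chiE.norm.pow_const 2).stronglyMeasurable
    (fun p => by simpa using norm_chiE_le_one p) ((continuousAt_chiE hp₀).norm.pow 2)).comp hvar
  replace hlim := hlim.congr' hnorm
  refine ⟨fun he => ?_, fun ho => ?_⟩ <;> convert hlim using 2
  · simp [chiE, he]
  · simp [chiE, Int.not_even_iff_odd.mpr ho]
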